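/- Let u(t,r) be a C² eikonal function for the spherically symmetric problem, satisfying Lu = 0 where L = ∂ₜ + √(1+Ψ)∂ᵣ, and define μ⁻¹ := ∂ₜu with μ > 0. Then μ satisfies the transport equation L μ = -(1/(4(1+Ψ))) μ (LΨ + L̄Ψ), where L̄ = ∂ₜ - √(1+Ψ)∂ᵣ. -/

import Mathlib

/-! With `a = ∂ₜu`, `b = ∂ᵣu` and `s = √(1 + Ψ)`, the eikonal equation reads `a + s b = 0`
everywhere. Differentiating it in `t` and using the symmetry of `D²u` gives
`L a = -b ∂ₜs = a ∂ₜΨ / (2 (1 + Ψ))`. Since `μ = a⁻¹`, `L μ = -μ² L a`, and finally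
`∂ₜΨ = ½ (LΨ + L̄Ψ)`. -/

open ContinuousLinearMap

section

variable {E F : Type*} [NormedAddCommGroup E] [NormedSpace ℝ E] [NormedAddCommGroup F]
  [NormedSpace ℝ F]

/-- The commutator `[∂_w, V·∇] u = Du (∂_w V)`, written with `D²u (V, w)` in place of
`D²u (w, V)` thanks to the symmetry of second derivatives. -/
theorem fderiv_fderiv_apply_field {u : E → F} {V : E → E} {p : E} (hu : ContDiffAt ℝ 2 u p)
    (hV : DifferentiableAt ℝ V p) (w : E) :
    fderiv ℝ (fun q => fderiv ℝ u q (V q)) p w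
      = fderiv ℝ (fun q => fderiv ℝ u q w) p (V p) + fderiv ℝ u p (fderiv ℝ V p w) := by
  have hDu : DifferentiableAt ℝ (fderiv ℝ u) p :=
    (hu.fderiv_right (m := 1) le_rfl).differentiableAt one_ne_zero
  rw [fderiv_clm_apply hDu hV, fderiv_clm_apply hDu (differentiableAt_const w)]
  simp [hu.isSymmSndFDerivAt (by simp) w (V p), add_comm]

theorem fderiv_fderiv_apply_eq_neg_of_fderiv_apply_field_eq_zero {u : E → F} {V : E → E}
    {p : E} (hu : ContDiffAt ℝ 2 u p) (hV : DifferentiableAt ℝ V p)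
    (hLu : ∀ q, fderiv ℝ u q (V q) = 0) (w : E) :
    fderiv ℝ (fun q => fderiv ℝ u q w) p (V p) = -fderiv ℝ u p (fderiv ℝ V p w) := by
  have h := fderiv_fderiv_apply_field hu hV w
  simp only [hLu, fderiv_const_apply, zero_apply] at h
  exact eq_neg_of_add_eq_zero_left h.symm

theorem fderiv_eq_neg_sq_mul_of_mul_eq_one {μ a : E → ℝ} {p : E} (h : ∀ q, μ q * a q = 1)
    (ha : DifferentiableAt ℝ a p) (v : E) :
    fderiv ℝ μ p v = -μ p ^ 2 * fderiv ℝ a p v := by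
  have hμ : μ = fun q => (a q)⁻¹ := funext fun q => eq_inv_of_mul_eq_one_left (h q)
  have ha0 : a p ≠ 0 := right_ne_zero_of_mul_eq_one (h p)
  have hinv := ((hasDerivAt_inv ha0).comp_hasFDerivAt p ha.hasFDerivAt).fderiv
  rw [Function.comp_def] at hinv
  rw [hμ, hinv]
  simp [inv_pow]

theorem hasFDerivAt_one_sqrt_one_add {Ψ : E → ℝ} {p : E} (hΨ : DifferentiableAt ℝ Ψ p)
    (hp : -1 < Ψ p) :
    HasFDerivAt (fun q => ((1 : ℝ), √(1 + Ψ q)))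
      ((0 : E →L[ℝ] ℝ).prod ((1 / (2 * √(1 + Ψ p))) • fderiv ℝ Ψ p)) p :=
  (hasFDerivAt_const _ _).prodMk <|
    (hΨ.hasFDerivAt.const_add 1).sqrt (by linarith)

end

theorem apply_mk_eq_mul_add_mul (f : ℝ × ℝ →L[ℝ] ℝ) (t r : ℝ) :
    f (t, r) = t * f (1, 0) + r * f (0, 1) := by
  rw [← smul_eq_mul t, ← smul_eq_mul r, ← map_smul, ← map_smul, ← map_add]
  simp

theorem stmt_13_general (Ψ u μ : ℝ × ℝ → ℝ) (hΨ : ContDiff ℝ 2 Ψ) (hu : ContDiff ℝ 2 u)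
    (hpos : ∀ p, -1 < Ψ p)
    (heik : ∀ p, fderiv ℝ u p (1, Real.sqrt (1 + Ψ p)) = 0)
    (hμ : ∀ p, μ p * fderiv ℝ u p (1, 0) = 1) (p : ℝ × ℝ) :
    fderiv ℝ μ p (1, Real.sqrt (1 + Ψ p))
      = -(1 / (4 * (1 + Ψ p))) * μ p *
        (fderiv ℝ Ψ p (1, Real.sqrt (1 + Ψ p))
          + fderiv ℝ Ψ p (1, -Real.sqrt (1 + Ψ p))) := by
  set s := √(1 + Ψ p)
  have hs : s ^ 2 = 1 + Ψ p := Real.sq_sqrt (by linarith [hpos p])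
  have hs0 : s ≠ 0 := (Real.sqrt_pos.2 (by linarith [hpos p])).ne'
  have hV := hasFDerivAt_one_sqrt_one_add (hΨ.differentiable two_ne_zero p) (hpos p)
  have hLa := fderiv_fderiv_apply_eq_neg_of_fderiv_apply_field_eq_zero hu.contDiffAt
    hV.differentiableAt heik (1, 0)
  have ha : DifferentiableAt ℝ (fun q => fderiv ℝ u q (1, 0)) p :=
    ((hu.fderiv_right (m := 1) le_rfl).differentiable one_ne_zero p).clm_apply
      (differentiableAt_const _)
  have heik_p : fderiv ℝ u p (1, 0) + s * fderiv ℝ u p (0, 1) = 0 := by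
    rw [← one_mul (fderiv ℝ u p (1, 0)), ← apply_mk_eq_mul_add_mul]
    exact heik p
  have hLΨ : fderiv ℝ Ψ p (1, s) + fderiv ℝ Ψ p (1, -s) = 2 * fderiv ℝ Ψ p (1, 0) := by
    rw [apply_mk_eq_mul_add_mul _ 1 s, apply_mk_eq_mul_add_mul _ 1 (-s)]
    ring
  have hVt : fderiv ℝ (fun q => ((1 : ℝ), √(1 + Ψ q))) p (1, 0)
      = (0, fderiv ℝ Ψ p (1, 0) / (2 * s)) := by
    rw [hV.fderiv]
    simp [s, div_eq_inv_mul, mul_comm]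
  rw [fderiv_eq_neg_sq_mul_of_mul_eq_one hμ ha, hLa, hVt, apply_mk_eq_mul_add_mul _ 0, hLΨ,
    ← hs]
  field_simp
  linear_combination 4 * μ p ^ 2 * fderiv ℝ Ψ p (1, 0) * heik_p
    - 4 * μ p * fderiv ℝ Ψ p (1, 0) * hμ p

/-- Transport equation for the inverse foliation density: if Lu = 0 and
μ⁻¹ = ∂ₜu with μ > 0, then Lμ = -(1/(4(1+Ψ)))μ(LΨ + L̄Ψ). -/
theorem stmt_13 (Ψ u μ : ℝ × ℝ → ℝ) (hΨ : ContDiff ℝ 2 Ψ) (hu : ContDiff ℝ 2 u)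
    (hpos : ∀ p, -1 < Ψ p)
    (heik : ∀ p, fderiv ℝ u p (1, Real.sqrt (1 + Ψ p)) = 0)
    (hμpos : ∀ p, 0 < μ p)
    (hμ : ∀ p, μ p * fderiv ℝ u p (1, 0) = 1) (p : ℝ × ℝ) :
    fderiv ℝ μ p (1, Real.sqrt (1 + Ψ p))
      = -(1 / (4 * (1 + Ψ p))) * μ p *
        (fderiv ℝ Ψ p (1, Real.sqrt (1 + Ψ p))
          + fderiv ℝ Ψ p (1, -Real.sqrt (1 + Ψ p))) :=
  stmt_13_general Ψ u μ hΨ hu hpos heik hμ p
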